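/- arXiv:2103.10622 — 2 statements merged into one kernel-verified Lean document; each statement's English description precedes it below -/
import Mathlib

section
/- For positive integers r, p, m with m ≥ r+1, the Euler sum of generalized hyperharmonic numbers satisfies ζ_{H^{(p,r)}}(m) := ∑_{n=1}^∞ H_n^{(p,r)}/n^m = ∑_{ℓ=0}^{r−1} ∑_{j=0}^{r−1−ℓ} a(r,ℓ,j)·S^{+,+}_{p−ℓ, m−j}, where S^{+,+}_{q,s} := ∑_{n=1}^∞ H_n^{(q)}/n^s. -/
/-- The nested sum `T(r,n,t)`: `T(1,n,t) = 1`, `T(r+1,n,t) = ∑_{k=t}^n T(r,k,t)`.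
    (`Tsum 0` is an unused dummy value.) -/
def Tsum : ℕ → ℕ → ℕ → ℚ
  | 0, _, _ => 0
  | 1, _, _ => 1
  | r + 2, n, t => ∑ k ∈ Finset.Icc t n, Tsum (r + 1) k t

/-- Generalized harmonic numbers with integer exponent:
    `Hz q n = ∑_{x=1}^n x^{-q}` (for `q ≤ 0` this is `∑_{x=1}^n x^{|q|}`). -/
def Hz (q : ℤ) (n : ℕ) : ℚ := ∑ x ∈ Finset.Icc 1 n, (x : ℚ) ^ (-q)

/-- Generalized hyperharmonic numbers: `Hpr p 1 n = H_n^{(p)} = ∑_{j=1}^n 1/j^p`,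
    `Hpr p (r+1) n = ∑_{j=1}^n Hpr p r j`. (`Hpr p 0` is an unused dummy value.) -/
def Hpr : ℕ → ℕ → ℕ → ℚ
  | _, 0, _ => 0
  | p, 1, n => ∑ j ∈ Finset.Icc 1 n, (1 : ℚ) / (j : ℚ) ^ p
  | p, r + 2, n => ∑ j ∈ Finset.Icc 1 n, Hpr p (r + 1) j

/-- The classical linear Euler sum `S^{+,+}_{q,s} = ∑_{n=1}^∞ H_n^{(q)}/n^s`. -/
noncomputable def S (q : ℤ) (s : ℕ) : ℝ :=
  ∑' n : ℕ, ((Hz q (n + 1) : ℚ) : ℝ) / (n + 1 : ℝ) ^ s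

/-- The Euler sum of generalized hyperharmonic numbers
    `ζ_{H^{(p,r)}}(m) = ∑_{n=1}^∞ H_n^{(p,r)}/n^m`. -/
noncomputable def zetaHpr (p r m : ℕ) : ℝ :=
  ∑' n : ℕ, ((Hpr p r (n + 1) : ℚ) : ℝ) / (n + 1 : ℝ) ^ m

/-!
Unfolding the recursion of `H^{(p,r)}` and exchanging the order of summation gives
`H_n^{(p,r)} = ∑_{t=1}^n T(r,n,t)/t^p`. Substituting the polynomial expansion of `T(r,n,t)` turns
`H_n^{(p,r)}/n^m` into a finite combination of the terms `H_n^{(p-ℓ)}/n^{m-j}`. Each of these series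
converges because `H_n^{(p-ℓ)} ≤ n^ℓ H_n ≤ 2 n^ℓ √n` and `m - j ≥ ℓ + 2`, so the infinite sum
commutes with the finite one.
-/

open Finset

lemma Hz_succ (q : ℤ) (n : ℕ) : Hz q (n + 1) = Hz q n + ((n + 1 : ℕ) : ℚ) ^ (-q) := by
  rw [Hz, Hz, sum_Icc_succ_top (by omega)]

lemma Hz_nonneg (q : ℤ) (n : ℕ) : 0 ≤ Hz q n :=
  sum_nonneg fun x _ => by positivity

lemma Hz_le_pow_mul_Hz_one {q : ℤ} {ℓ : ℕ} (hq : 1 ≤ q + ℓ) (n : ℕ) :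
    Hz q n ≤ (n : ℚ) ^ ℓ * Hz 1 n := by
  rw [Hz, Hz, mul_sum]
  refine sum_le_sum fun x hx => ?_
  obtain ⟨hx1, hxn⟩ := mem_Icc.mp hx
  have hx1' : (1 : ℚ) ≤ x := by exact_mod_cast hx1
  calc (x : ℚ) ^ (-q) = (x : ℚ) ^ ℓ * (x : ℚ) ^ (-(q + ℓ)) := by
        rw [← zpow_natCast, ← zpow_add₀ (by positivity)]; ring_nf
    _ ≤ (n : ℚ) ^ ℓ * (x : ℚ) ^ (-1 : ℤ) := by gcongr

lemma Hz_one_le_two_sqrt (n : ℕ) : ((Hz 1 n : ℚ) : ℝ) ≤ 2 * √n := by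
  induction n with
  | zero => simp [Hz]
  | succ n ih =>
    have hsqrt_step : 1 / ((n : ℝ) + 1) ≤ 2 * √((n : ℝ) + 1) - 2 * √n := by
      have hs := Real.sq_sqrt (Nat.cast_nonneg n : (0 : ℝ) ≤ n)
      have ht := Real.sq_sqrt (by positivity : (0 : ℝ) ≤ n + 1)
      have hst : √n ≤ √((n : ℝ) + 1) := Real.sqrt_le_sqrt (by linarith)
      rw [div_le_iff₀ (by positivity)]
      nlinarith [Real.sqrt_nonneg n, sq_nonneg (√((n : ℝ) + 1) - √n)]
    rw [Hz_succ]
    push_cast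
    rw [zpow_neg_one, ← one_div]
    linarith

lemma summable_Hz_div_pow {q : ℤ} {ℓ s : ℕ} (hq : 1 ≤ q + ℓ) (hs : ℓ + 2 ≤ s) :
    Summable fun n : ℕ => ((Hz q (n + 1) : ℚ) : ℝ) / ((n : ℝ) + 1) ^ s := by
  have hmajorant : Summable fun n : ℕ => 2 * ((n : ℝ) + 1) ^ (-(3 / 2) : ℝ) := by
    refine Summable.mul_left 2 ?_
    exact_mod_cast (summable_nat_add_iff 1).mpr (Real.summable_nat_rpow.mpr (by norm_num))
  refine hmajorant.of_nonneg_of_le (fun n => by have := Hz_nonneg q (n + 1); positivity)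
    fun n => ?_
  have hHz : ((Hz q (n + 1) : ℚ) : ℝ) ≤ ((n : ℝ) + 1) ^ ℓ * (2 * √((n : ℝ) + 1)) := by
    have hHz_one := Hz_one_le_two_sqrt (n + 1)
    have hHz_q : ((Hz q (n + 1) : ℚ) : ℝ) ≤ ((n + 1 : ℕ) : ℝ) ^ ℓ * ((Hz 1 (n + 1) : ℚ) : ℝ) := by
      exact_mod_cast Hz_le_pow_mul_Hz_one hq (n + 1)
    push_cast at hHz_one hHz_q
    exact hHz_q.trans (by gcongr)
  calc ((Hz q (n + 1) : ℚ) : ℝ) / ((n : ℝ) + 1) ^ s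
      ≤ ((n : ℝ) + 1) ^ ℓ * (2 * √((n : ℝ) + 1)) / ((n : ℝ) + 1) ^ (ℓ + 2) := by
        gcongr
        exact le_add_of_nonneg_left n.cast_nonneg
    _ = 2 * ((n : ℝ) + 1) ^ (-(3 / 2) : ℝ) := by
        rw [Real.sqrt_eq_rpow, pow_add, mul_div_mul_left _ _ (by positivity),
          ← Real.rpow_natCast, mul_div_assoc, ← Real.rpow_sub (by positivity)]
        norm_num

lemma Hpr_eq_sum_Tsum_div_pow (p : ℕ) {r : ℕ} (hr : 1 ≤ r) (n : ℕ) :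
    Hpr p r n = ∑ t ∈ Icc 1 n, Tsum r n t / (t : ℚ) ^ p := by
  induction r, hr using Nat.le_induction generalizing n with
  | base => simp [Hpr, Tsum]
  | succ r hr ih =>
    obtain ⟨r, rfl⟩ : ∃ k, r = k + 1 := ⟨r - 1, by omega⟩
    calc Hpr p (r + 2) n = ∑ k ∈ Icc 1 n, ∑ t ∈ Icc 1 k, Tsum (r + 1) k t / (t : ℚ) ^ p :=
          sum_congr rfl fun k _ => ih k
      _ = ∑ t ∈ Icc 1 n, ∑ k ∈ Icc t n, Tsum (r + 1) k t / (t : ℚ) ^ p :=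
          sum_comm' fun k t => by simp only [mem_Icc]; omega
      _ = ∑ t ∈ Icc 1 n, Tsum (r + 2) n t / (t : ℚ) ^ p := by
          simp only [Tsum, sum_div]

lemma Hpr_eq_sum_mul_Hz (p : ℕ) {r : ℕ} (hr : 1 ≤ r) (I : Finset ℕ) (J : ℕ → Finset ℕ)
    (c : ℕ → ℕ → ℚ)
    (hT : ∀ t n : ℕ, 1 ≤ t → t ≤ n →
      Tsum r n t = ∑ ℓ ∈ I, ∑ j ∈ J ℓ, c ℓ j * (n : ℚ) ^ j * (t : ℚ) ^ ℓ) (n : ℕ) :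
    Hpr p r n = ∑ ℓ ∈ I, ∑ j ∈ J ℓ, c ℓ j * (n : ℚ) ^ j * Hz ((p : ℤ) - ℓ) n := by
  have hterm : ∀ t ∈ Icc 1 n, Tsum r n t / (t : ℚ) ^ p =
      ∑ ℓ ∈ I, ∑ j ∈ J ℓ, c ℓ j * (n : ℚ) ^ j * (t : ℚ) ^ (-((p : ℤ) - ℓ)) := by
    intro t ht
    obtain ⟨ht1, htn⟩ := mem_Icc.mp ht
    have ht0 : (t : ℚ) ≠ 0 := by positivity
    simp only [hT t n ht1 htn, sum_div, neg_sub, zpow_sub₀ ht0, zpow_natCast, mul_div_assoc]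
  rw [Hpr_eq_sum_Tsum_div_pow p hr, sum_congr rfl hterm, sum_comm]
  refine sum_congr rfl fun ℓ _ => ?_
  rw [sum_comm]
  simp only [← mul_sum, Hz]

lemma Hpr_div_pow_eq_sum (p : ℕ) {r m : ℕ} (hr : 1 ≤ r) (I : Finset ℕ) (J : ℕ → Finset ℕ)
    (c : ℕ → ℕ → ℚ)
    (hT : ∀ t n : ℕ, 1 ≤ t → t ≤ n →
      Tsum r n t = ∑ ℓ ∈ I, ∑ j ∈ J ℓ, c ℓ j * (n : ℚ) ^ j * (t : ℚ) ^ ℓ)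
    (hJ : ∀ ℓ ∈ I, ∀ j ∈ J ℓ, j ≤ m) (n : ℕ) :
    ((Hpr p r (n + 1) : ℚ) : ℝ) / ((n : ℝ) + 1) ^ m = ∑ ℓ ∈ I, ∑ j ∈ J ℓ,
      (c ℓ j : ℝ) * (((Hz ((p : ℤ) - ℓ) (n + 1) : ℚ) : ℝ) / ((n : ℝ) + 1) ^ (m - j)) := by
  rw [Hpr_eq_sum_mul_Hz p hr I J c hT]
  push_cast
  simp only [sum_div]
  refine sum_congr rfl fun ℓ hℓ => sum_congr rfl fun j hj => ?_
  rw [← Nat.sub_add_cancel (hJ ℓ hℓ j hj), pow_add, Nat.add_sub_cancel]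
  field_simp

theorem main_theorem (a : ℕ → ℕ → ℕ → ℚ)
    (ha : ∀ r, 1 ≤ r → ∀ t n : ℕ, 1 ≤ t → t ≤ n →
      Tsum r n t = ∑ ℓ ∈ Finset.range r, ∑ j ∈ Finset.range (r - ℓ),
        a r ℓ j * (n : ℚ) ^ j * (t : ℚ) ^ ℓ)
    (r p m : ℕ) (hr : 1 ≤ r) (hp : 1 ≤ p) (hm : r + 1 ≤ m) :
    zetaHpr p r m = ∑ ℓ ∈ Finset.range r, ∑ j ∈ Finset.range (r - ℓ),
      (a r ℓ j : ℝ) * S ((p : ℤ) - ℓ) (m - j) := by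
  have hindex : ∀ ℓ ∈ range r, ∀ j ∈ range (r - ℓ), ℓ + 2 ≤ m - j := by
    intro ℓ hℓ j hj
    simp only [mem_range] at hℓ hj
    omega
  have hsummable : ∀ ℓ ∈ range r, ∀ j ∈ range (r - ℓ), Summable fun n : ℕ =>
      (a r ℓ j : ℝ) * (((Hz ((p : ℤ) - ℓ) (n + 1) : ℚ) : ℝ) / ((n : ℝ) + 1) ^ (m - j)) :=
    fun ℓ hℓ j hj => (summable_Hz_div_pow (by omega) (hindex ℓ hℓ j hj)).mul_left _
  have hterm := Hpr_div_pow_eq_sum p (m := m) hr _ _ _ (ha r hr)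
    (fun ℓ hℓ j hj => by have := hindex ℓ hℓ j hj; omega)
  unfold zetaHpr
  rw [tsum_congr hterm, Summable.tsum_finsetSum fun ℓ hℓ => summable_sum (hsummable ℓ hℓ)]
  refine sum_congr rfl fun ℓ hℓ => ?_
  rw [Summable.tsum_finsetSum (hsummable ℓ hℓ)]
  exact sum_congr rfl fun j _ => tsum_mul_left
end

section
/- The coefficients a(r,m,ℓ) satisfy, for r ≥ 1: a(r+1,r,0) = −∑_{m=0}^{r−1} a(r,m,r−m−1)/(r−m). -/
/-!
Let `Q_{r,m} = ∑_{ℓ < r-m} a(r,m,ℓ) X^ℓ` (`ofCoeffs (a r m) (r - m)`), so that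
`T(r,n,t) = ∑ₘ Q_{r,m}(n) tᵐ` on `1 ≤ t ≤ n`. A polynomial identity holding on that region holds
identically, so `T(r+1,n+1,t) - T(r+1,n,t) = T(r,n+1,t)` gives
`Q_{r+1,m}(X+1) - Q_{r+1,m}(X) = Q_{r,m}(X+1)`, whose coefficient of `X^{r-m-1}` reads
`(r-m) a(r+1,m,r-m) = a(r,m,r-m-1)`. On the diagonal `T(r+1,t,t) = T(r,t,t)`, and the
coefficient of `t^r` gives `∑_{m ≤ r} a(r+1,m,r-m) = 0`. Solving for the term `m = r` yields the
recurrence.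
-/

open Polynomial Finset

namespace Polynomial

variable {R : Type*}

noncomputable def ofCoeffs [Semiring R] (c : ℕ → R) (d : ℕ) : R[X] :=
  ∑ i ∈ range d, monomial i (c i)

section OfCoeffs

variable [Semiring R] (c : ℕ → R) (d : ℕ)

theorem coeff_ofCoeffs (k : ℕ) : (ofCoeffs c d).coeff k = if k < d then c k else 0 := by
  simp only [ofCoeffs, finsetSum_coeff, coeff_monomial, sum_ite_eq', mem_range]

@[simp]
theorem ofCoeffs_zero : ofCoeffs c 0 = 0 := sum_range_zero _

theorem natDegree_ofCoeffs_le : (ofCoeffs c (d + 1)).natDegree ≤ d :=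
  natDegree_sum_le_of_forall_le _ _ fun _ hi =>
    (natDegree_monomial_le _).trans (Nat.lt_succ_iff.mp (mem_range.mp hi))

theorem eval_ofCoeffs (x : R) : (ofCoeffs c d).eval x = ∑ i ∈ range d, c i * x ^ i := by
  simp only [ofCoeffs, eval_finsetSum, eval_monomial]

end OfCoeffs

section Taylor

variable [CommRing R] {p : R[X]} {d : ℕ}

theorem coeff_taylor_of_natDegree_le_succ (r : R) (h : p.natDegree ≤ d + 1) :
    (taylor r p).coeff d = p.coeff d + (d + 1) * p.coeff (d + 1) * r := by
  have hdeg : (hasseDeriv d p).natDegree ≤ 1 :=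
    (natDegree_hasseDeriv_le p d).trans (by omega)
  rw [taylor_coeff, eq_X_add_C_of_natDegree_le_one hdeg]
  simp only [hasseDeriv_coeff, eval_add, eval_mul, eval_C, eval_X, zero_add,
    Nat.choose_self, Nat.choose_succ_self_right, add_comm 1 d]
  push_cast
  ring

theorem coeff_taylor_of_natDegree_le (r : R) (h : p.natDegree ≤ d) :
    (taylor r p).coeff d = p.coeff d := by
  rw [coeff_taylor_of_natDegree_le_succ r (h.trans d.le_succ),
    coeff_eq_zero_of_natDegree_lt (h.trans_lt d.lt_succ_self)]
  ring

end Taylor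

section CharZero

variable [CommRing R] [IsDomain R] [CharZero R]

theorem eq_zero_of_forall_eval_natCast_eq_zero (p : R[X]) (N : ℕ)
    (h : ∀ n : ℕ, N ≤ n → p.eval (n : R) = 0) : p = 0 := by
  refine eq_zero_of_infinite_isRoot p ?_
  refine Set.Infinite.mono ?_ ((Set.Ici_infinite N).image Nat.cast_injective.injOn)
  rintro _ ⟨n, hn, rfl⟩
  exact h n hn

theorem eq_zero_of_forall_sum_eval_mul_pow_eq_zero (F : ℕ → R[X]) (M N : ℕ)
    (h : ∀ t n : ℕ, N ≤ t → t ≤ n → ∑ m ∈ range M, (F m).eval (n : R) * (t : R) ^ m = 0)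
    {m : ℕ} (hm : m < M) : F m = 0 := by
  have hslice (t : ℕ) (ht : N ≤ t) : ∑ m ∈ range M, C ((t : R) ^ m) * F m = 0 :=
    eq_zero_of_forall_eval_natCast_eq_zero _ t fun n hn => by
      simpa [eval_finsetSum, mul_comm] using h t n ht hn
  ext k
  have hcoeff : ofCoeffs (fun m => (F m).coeff k) M = 0 :=
    eq_zero_of_forall_eval_natCast_eq_zero _ N fun t ht => by
      have := congrArg (coeff · k) (hslice t ht)
      simp only [finsetSum_coeff, coeff_C_mul, coeff_zero] at this
      simpa only [eval_ofCoeffs, mul_comm] using this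
  simpa [coeff_ofCoeffs, hm] using congrArg (coeff · m) hcoeff

end CharZero

end Polynomial

theorem Tsum_succ {r : ℕ} (hr : 1 ≤ r) (n t : ℕ) :
    Tsum (r + 1) n t = ∑ k ∈ Icc t n, Tsum r k t := by
  obtain ⟨s, rfl⟩ := Nat.exists_eq_add_of_le' hr
  rfl

theorem Tsum_succ_succ_right {r : ℕ} (hr : 1 ≤ r) {n t : ℕ} (h : t ≤ n + 1) :
    Tsum (r + 1) (n + 1) t = Tsum (r + 1) n t + Tsum r (n + 1) t := by
  rw [Tsum_succ hr, Tsum_succ hr, sum_Icc_succ_top h]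

theorem Tsum_succ_self {r : ℕ} (hr : 1 ≤ r) (t : ℕ) : Tsum (r + 1) t t = Tsum r t t := by
  rw [Tsum_succ hr, Icc_self, sum_singleton]

def RepresentsTsum (c : ℕ → ℕ → ℚ) (r : ℕ) : Prop :=
  ∀ t n : ℕ, 1 ≤ t → t ≤ n →
    Tsum r n t = ∑ m ∈ range r, (ofCoeffs (c m) (r - m)).eval (n : ℚ) * (t : ℚ) ^ m

namespace RepresentsTsum

variable {a b : ℕ → ℕ → ℚ} {r : ℕ}

theorem eval_sum_range_succ (hA : RepresentsTsum a r) {t n : ℕ} (ht : 1 ≤ t) (htn : t ≤ n) :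
    Tsum r n t = ∑ m ∈ range (r + 1), (ofCoeffs (a m) (r - m)).eval (n : ℚ) * (t : ℚ) ^ m := by
  rw [sum_range_succ, Nat.sub_self, ofCoeffs_zero, eval_zero, zero_mul, add_zero,
    hA t n ht htn]

theorem mul_coeff_top (hr : 1 ≤ r) (hA : RepresentsTsum a r) (hB : RepresentsTsum b (r + 1))
    {m : ℕ} (hm : m < r) : ((r : ℚ) - m) * b m (r - m) = a m (r - m - 1) := by
  set A := fun m => ofCoeffs (a m) (r - m)
  set B := fun m => ofCoeffs (b m) (r + 1 - m)
  have hdiff : taylor 1 (B m) - B m - taylor 1 (A m) = 0 := by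
    refine eq_zero_of_forall_sum_eval_mul_pow_eq_zero
      (fun m => taylor 1 (B m) - B m - taylor 1 (A m)) (r + 1) 1 (fun t n ht htn => ?_)
      (by omega)
    have hstep := Tsum_succ_succ_right hr (n := n) (by omega : t ≤ n + 1)
    rw [hB t n ht htn, hB t (n + 1) ht (by omega), hA.eval_sum_range_succ ht (by omega)] at hstep
    simp only [A, B, eval_sub, taylor_eval, sub_mul, sum_sub_distrib]
    push_cast at hstep
    linear_combination hstep
  obtain ⟨j, hj⟩ : ∃ j, r - m = j + 1 := ⟨r - m - 1, by omega⟩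
  simp only [A, B, hj, show r + 1 - m = j + 1 + 1 by omega] at hdiff
  have hcoeff := congrArg (coeff · j) hdiff
  simp only [coeff_sub, coeff_zero, coeff_ofCoeffs,
    coeff_taylor_of_natDegree_le_succ _ (natDegree_ofCoeffs_le _ _),
    coeff_taylor_of_natDegree_le _ (natDegree_ofCoeffs_le _ _), lt_add_one, if_true] at hcoeff
  have hcast : (r : ℚ) - m = j + 1 := by
    rw [← Nat.cast_sub hm.le, hj]; push_cast; ring
  rw [hcast, hj, Nat.add_sub_cancel]
  linear_combination hcoeff

theorem sum_coeff_antidiagonal (hr : 1 ≤ r) (hA : RepresentsTsum a r)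
    (hB : RepresentsTsum b (r + 1)) : ∑ m ∈ range (r + 1), b m (r - m) = 0 := by
  set D := ∑ m ∈ range (r + 1), ofCoeffs (b m) (r + 1 - m) * X ^ m
    - ∑ m ∈ range r, ofCoeffs (a m) (r - m) * X ^ m
  have hD : D = 0 := eq_zero_of_forall_eval_natCast_eq_zero D 1 fun t ht => by
    have hdiag := Tsum_succ_self hr t
    rw [hB t t ht le_rfl, hA t t ht le_rfl] at hdiag
    simpa only [D, eval_sub, eval_finsetSum, eval_mul, eval_pow, eval_X, sub_eq_zero] using hdiag
  have hcoeff := congrArg (coeff · r) hD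
  simp only [D, coeff_sub, finsetSum_coeff, coeff_mul_X_pow', coeff_ofCoeffs, coeff_zero] at hcoeff
  have hB_top : ∀ m ∈ range (r + 1),
      (if m ≤ r then if r - m < r + 1 - m then b m (r - m) else 0 else 0) = b m (r - m) :=
    fun m hm => by rw [mem_range] at hm; rw [if_pos (by omega), if_pos (by omega)]
  have hA_top : ∀ m ∈ range r,
      (if m ≤ r then if r - m < r - m then a m (r - m) else 0 else 0) = 0 :=
    fun m _ => by simp
  rwa [sum_congr rfl hB_top, sum_eq_zero hA_top, sub_zero] at hcoeff

end RepresentsTsum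

theorem a_recurrence_top_general (a : ℕ → ℕ → ℕ → ℚ)
    (ha : ∀ r, 1 ≤ r → ∀ t n : ℕ, 1 ≤ t → t ≤ n →
      Tsum r n t = ∑ m ∈ Finset.range r, ∑ ℓ ∈ Finset.range (r - m),
        a r m ℓ * (n : ℚ) ^ ℓ * (t : ℚ) ^ m)
    (r : ℕ) (hr : 1 ≤ r) :
    a (r + 1) r 0 = -∑ m ∈ Finset.range r, a r m (r - m - 1) / ((r : ℚ) - m) := by
  have hrep (s : ℕ) (hs : 1 ≤ s) : RepresentsTsum (a s) s := fun t n ht htn => by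
    simp only [ha s hs t n ht htn, eval_ofCoeffs, sum_mul]
  have hA := hrep r hr
  have hB := hrep (r + 1) (by omega)
  have hdiag := hA.sum_coeff_antidiagonal hr hB
  rw [sum_range_succ, Nat.sub_self] at hdiag
  rw [eq_neg_iff_add_eq_zero, ← hdiag, add_comm]
  refine congrArg (· + _) (sum_congr rfl fun m hm => ?_)
  have hm : m < r := mem_range.mp hm
  rw [div_eq_iff (sub_ne_zero.mpr (by exact_mod_cast hm.ne')), mul_comm,
    hA.mul_coeff_top hr hB hm]

theorem a_recurrence_top (a : ℕ → ℕ → ℕ → ℚ)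
    (ha : ∀ r, 1 ≤ r → ∀ t n : ℕ, 1 ≤ t → t ≤ n →
      Tsum r n t = ∑ m ∈ Finset.range r, ∑ ℓ ∈ Finset.range (r - m),
        a r m ℓ * (n : ℚ) ^ ℓ * (t : ℚ) ^ m)
    (ha1 : a 1 0 0 = 1)
    (r : ℕ) (hr : 1 ≤ r) :
    a (r + 1) r 0 = -∑ m ∈ Finset.range r, a r m (r - m - 1) / ((r : ℚ) - m) :=
  a_recurrence_top_general a ha r hr
end
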